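/- arXiv:2109.11528 — 2 statements merged into one kernel-verified Lean document; each statement's English description precedes it below -/
import Mathlib

section
/- The map (A, M) ↦ tr((A M A)^s) on pairs of 2×2 positive definite matrices is not jointly convex for any s > 0. -/
/-!
Take diagonal `A, M` with positive real entries, so that `A M A` is diagonal too. For
`A₁ = diag(1/2, 1)`, `M₁ = diag(4, 1)` and `A₂ = diag(1, 1/2)`, `M₂ = diag(1, 4)` both products
`Aᵢ Mᵢ Aᵢ` are the identity, while the midpoint `(3/4 · I, 5/2 · I)` gives `A M A = 45/32 · I`.
For scalar matrices the functional calculus is just `c • I ↦ c ^ s • I`, so midpoint convexity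
would force `2 · (45/32) ^ s ≤ 2`, which fails for `s > 0`.
-/

open Matrix
open scoped ComplexOrder

variable {n : Type*} [Fintype n] [DecidableEq n]

/-- Real power of a matrix via the spectral functional calculus (junk value `0`
for non-Hermitian matrices). -/
noncomputable def matRpow (r : ℝ) (A : Matrix n n ℂ) : Matrix n n ℂ :=
  if hA : A.IsHermitian then
    (hA.eigenvectorUnitary : Matrix n n ℂ) *
      Matrix.diagonal (fun i => ((hA.eigenvalues i ^ r : ℝ) : ℂ)) *
      (hA.eigenvectorUnitary : Matrix n n ℂ)ᴴ
  else 0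

/-- `Λ_{r,s}(A)[K,M] = tr((K* A^r M A^r K)^s)`. -/
noncomputable def Lam (r s : ℝ) (K M A : Matrix n n ℂ) : ℂ :=
  (matRpow s (Kᴴ * matRpow r A * M * matRpow r A * K)).trace

theorem matRpow_eq_cfc {A : Matrix n n ℂ} (hA : A.IsHermitian) (r : ℝ) :
    matRpow r A = cfc (fun x : ℝ => x ^ r) A := by
  rw [matRpow, dif_pos hA, hA.cfc_eq, IsHermitian.cfc, Unitary.conjStarAlgAut_apply,
    star_eq_conjTranspose]
  rfl

theorem matRpow_algebraMap (r c : ℝ) :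
    matRpow r (algebraMap ℝ (Matrix n n ℂ) c) = algebraMap ℝ _ (c ^ r) := by
  rw [matRpow_eq_cfc (IsSelfAdjoint.algebraMap _ (.all c)).isHermitian, cfc_algebraMap]

theorem re_trace_algebraMap (c : ℝ) :
    (algebraMap ℝ (Matrix n n ℂ) c).trace.re = Fintype.card n * c := by
  simp [Algebra.algebraMap_eq_smul_one, mul_comm]

section RealDiagonal

variable {ι : Type*} [DecidableEq ι]

noncomputable def realDiagonal (d : ι → ℝ) : Matrix ι ι ℂ :=
  diagonal fun i => (d i : ℂ)

theorem posDef_realDiagonal [Fintype ι] {d : ι → ℝ} (hd : ∀ i, 0 < d i) :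
    (realDiagonal d).PosDef :=
  posDef_diagonal_iff.2 fun i => Complex.zero_lt_real.2 (hd i)

theorem smul_realDiagonal_add_smul_realDiagonal (t u : ℝ) (a b : ι → ℝ) :
    t • realDiagonal a + u • realDiagonal b = realDiagonal (t • a + u • b) := by
  ext i j
  rcases eq_or_ne i j with rfl | hij
  · simp [realDiagonal, Complex.real_smul]
  · simp [realDiagonal, hij]

theorem realDiagonal_mul_mul_eq_algebraMap [Fintype ι] {a m : ι → ℝ} {c : ℝ}
    (h : ∀ i, a i * m i * a i = c) :
    realDiagonal a * realDiagonal m * realDiagonal a = algebraMap ℝ _ c := by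
  simp only [realDiagonal, diagonal_mul_diagonal, algebraMap_eq_diagonal]
  congr 1
  ext i
  simp [← h i]

theorem re_trace_matRpow_realDiagonal_mul_mul [Fintype ι] (s : ℝ) {a m : ι → ℝ} {c : ℝ}
    (h : ∀ i, a i * m i * a i = c) :
    (matRpow s (realDiagonal a * realDiagonal m * realDiagonal a)).trace.re =
      Fintype.card ι * c ^ s := by
  rw [realDiagonal_mul_mul_eq_algebraMap h, matRpow_algebraMap, re_trace_algebraMap]

end RealDiagonal

/-- The map `(A, M) ↦ tr((A M A)^s)` on pairs of `2×2` positive definite matrices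
is not jointly convex for any `s > 0`. -/
theorem not_jointly_convex (s : ℝ) (hs : 0 < s) :
    ¬ ConvexOn ℝ
      {p : Matrix (Fin 2) (Fin 2) ℂ × Matrix (Fin 2) (Fin 2) ℂ | p.1.PosDef ∧ p.2.PosDef}
      (fun p => ((matRpow s (p.1 * p.2 * p.1)).trace).re) := by
  intro hconv
  let a₁ : Fin 2 → ℝ := ![1/2, 1]
  let m₁ : Fin 2 → ℝ := ![4, 1]
  let a₂ : Fin 2 → ℝ := ![1, 1/2]
  let m₂ : Fin 2 → ℝ := ![1, 4]
  have mem (a m : Fin 2 → ℝ) (ha : ∀ i, 0 < a i) (hm : ∀ i, 0 < m i) :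
      (realDiagonal a, realDiagonal m) ∈
        {p : Matrix (Fin 2) (Fin 2) ℂ × Matrix (Fin 2) (Fin 2) ℂ | p.1.PosDef ∧ p.2.PosDef} :=
    ⟨posDef_realDiagonal ha, posDef_realDiagonal hm⟩
  have key := hconv.2
    (mem a₁ m₁ (by simp [a₁, Fin.forall_fin_two]) (by simp [m₁, Fin.forall_fin_two]))
    (mem a₂ m₂ (by simp [a₂, Fin.forall_fin_two]) (by simp [m₂, Fin.forall_fin_two]))
    (by norm_num : (0 : ℝ) ≤ 1/2) (by norm_num : (0 : ℝ) ≤ 1/2) (by norm_num)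
  simp only [Prod.smul_mk, Prod.mk_add_mk, smul_realDiagonal_add_smul_realDiagonal] at key
  have h₁ : ∀ i, a₁ i * m₁ i * a₁ i = 1 := by simp [a₁, m₁, Fin.forall_fin_two]; norm_num
  have h₂ : ∀ i, a₂ i * m₂ i * a₂ i = 1 := by simp [a₂, m₂, Fin.forall_fin_two]; norm_num
  have hmid : ∀ i, ((1/2 : ℝ) • a₁ + (1/2 : ℝ) • a₂) i * ((1/2 : ℝ) • m₁ + (1/2 : ℝ) • m₂) i *
      ((1/2 : ℝ) • a₁ + (1/2 : ℝ) • a₂) i = 45/32 := by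
    simp [a₁, a₂, m₁, m₂, Fin.forall_fin_two]; norm_num
  rw [re_trace_matRpow_realDiagonal_mul_mul s h₁, re_trace_matRpow_realDiagonal_mul_mul s h₂,
    re_trace_matRpow_realDiagonal_mul_mul s hmid] at key
  have hgrowth : 1 < (45/32 : ℝ) ^ s := Real.one_lt_rpow (by norm_num) hs
  norm_num at key
  linarith
end

section
/- The map A ↦ tr((K* A M A K)^s) on 2×2 positive definite matrices A is not concave for any s > 0, when K = [[1,0],[0,0]] and M = [[1,t],[t,1]] with 0 < t² < 1/2. -/
/-!
Since `K = e₁₁`, the matrix `K* A M A K` is `(A M A)₁₁ e₁₁`, so the map is `A ↦ ((A M A)₁₁)^s`;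
on the correlation matrices `A_ρ = [[1, ρ], [ρ, 1]]` it equals `(1 + 2ρt + ρ²)^s`.
Compare `A_0 = I`, `A_{-t/2}` and their midpoint `A_{-t/4}`: the bases are `1`, `a = 1 - 3t²/4`
and `m = 1 - 7t²/16`, and `m² < a` exactly when `0 < t² < 32/49`. Hence
`m^s ≤ (1 + m^{2s})/2 < (1 + a^s)/2`, against midpoint concavity.
-/

open Matrix
open scoped ComplexOrder

variable {n : Type*} [Fintype n] [DecidableEq n]

lemma trace_matRpow {B : Matrix n n ℂ} (hB : B.IsHermitian) (r : ℝ) :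
    (matRpow r B).trace = ∑ i, ((hB.eigenvalues i ^ r : ℝ) : ℂ) := by
  rw [matRpow, dif_pos hB, trace_mul_cycle, ← star_eq_conjTranspose,
    Unitary.coe_star_mul_self, one_mul, trace_diagonal]

lemma map_eigenvalues_diagonal (d : n → ℝ) (hd : (diagonal fun i => (d i : ℂ)).IsHermitian) :
    Finset.univ.val.map hd.eigenvalues = Finset.univ.val.map d := by
  have hroots : (diagonal fun i => (d i : ℂ)).charpoly.roots =
      Finset.univ.val.map fun i => (d i : ℂ) := by
    rw [charpoly_diagonal, Finset.prod_eq_multiset_prod, ← Polynomial.roots_multiset_prod_X_sub_C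
      (Finset.univ.val.map fun i => (d i : ℂ)), Multiset.map_map]
    rfl
  apply Multiset.map_injective Complex.ofReal_injective
  rw [Multiset.map_map, Multiset.map_map]
  exact hd.roots_charpoly_eq_eigenvalues.symm.trans hroots

lemma trace_matRpow_diagonal (r : ℝ) (d : n → ℝ) :
    (matRpow r (diagonal fun i => (d i : ℂ))).trace = ∑ i, ((d i ^ r : ℝ) : ℂ) := by
  have hd : (diagonal fun i => (d i : ℂ)).IsHermitian :=
    isHermitian_diagonal_of_self_adjoint _ (by ext; simp)
  have := congrArg (fun m => (m.map fun x => ((x ^ r : ℝ) : ℂ)).sum) (map_eigenvalues_diagonal d hd)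
  simpa only [trace_matRpow hd, Finset.sum_eq_multiset_sum, Multiset.map_map,
    Function.comp_def] using this

lemma trace_matRpow_single {r : ℝ} (hr : r ≠ 0) (i : n) (b : ℝ) :
    (matRpow r (single i i (b : ℂ))).trace = ((b ^ r : ℝ) : ℂ) := by
  have hsingle : single i i (b : ℂ) = diagonal fun j => ((Pi.single i b : n → ℝ) j : ℂ) := by
    rw [← diagonal_single]
    congr 1
    ext j
    by_cases hj : j = i <;> simp [hj]
  rw [hsingle, trace_matRpow_diagonal, Finset.sum_eq_single i (fun j _ hj => by
    simp [Pi.single_eq_of_ne hj, Real.zero_rpow hr]) (by simp)]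
  simp

def corrMatrix (ρ : ℝ) : Matrix (Fin 2) (Fin 2) ℂ := !![1, (ρ : ℂ); (ρ : ℂ), 1]

lemma smul_corrMatrix_add_smul_corrMatrix {α β : ℝ} (h : α + β = 1) (a b : ℝ) :
    α • corrMatrix a + β • corrMatrix b = corrMatrix (α * a + β * b) := by
  have h' : (α : ℂ) + β = 1 := by exact_mod_cast h
  ext i j
  fin_cases i <;> fin_cases j <;> simp [corrMatrix, Complex.real_smul, h']

lemma corrMatrix_posDef {ρ : ℝ} (hρ : ρ ^ 2 < 1) : (corrMatrix ρ).PosDef := by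
  set U : Matrix (Fin 2) (Fin 2) ℂ := !![1, (ρ : ℂ); 0, 1]
  have hU : IsUnit U := by simp [isUnit_iff_isUnit_det, U, det_fin_two_of]
  have hconj : corrMatrix ρ = star U * diagonal ![1, ((1 - ρ ^ 2 : ℝ) : ℂ)] * U := by
    ext i j
    fin_cases i <;> fin_cases j <;> simp [corrMatrix, U, mul_apply, Fin.sum_univ_two]
    ring
  rw [hconj, IsUnit.posDef_star_left_conjugate_iff hU]
  refine PosDef.diagonal fun i => ?_
  fin_cases i
  · simp
  · exact Complex.zero_lt_real.mpr (sub_pos.mpr hρ)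

lemma re_trace_matRpow_compress_corrMatrix {s : ℝ} (hs : s ≠ 0) (ρ σ : ℝ) :
    ((matRpow s ((!![1, 0; 0, 0] : Matrix (Fin 2) (Fin 2) ℂ)ᴴ * corrMatrix ρ *
      corrMatrix σ * corrMatrix ρ * !![1, 0; 0, 0])).trace).re = (1 + 2 * ρ * σ + ρ ^ 2) ^ s := by
  have hcompress : (!![1, 0; 0, 0] : Matrix (Fin 2) (Fin 2) ℂ)ᴴ * corrMatrix ρ *
      corrMatrix σ * corrMatrix ρ * !![1, 0; 0, 0] =
        single 0 0 ((1 + 2 * ρ * σ + ρ ^ 2 : ℝ) : ℂ) := by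
    ext i j
    fin_cases i <;> fin_cases j <;>
      simp [corrMatrix, mul_apply, Fin.sum_univ_two, conjTranspose_apply]
    ring
  rw [hcompress, trace_matRpow_single hs, Complex.ofReal_re]

lemma rpow_lt_one_add_rpow_div_two {m a s : ℝ} (hm : 0 ≤ m) (hma : m ^ 2 < a) (hs : 0 < s) :
    m ^ s < (1 + a ^ s) / 2 := by
  have hsq : (m ^ s) ^ 2 < a ^ s := by
    rw [← Real.rpow_natCast, ← Real.rpow_mul hm, mul_comm, Real.rpow_mul hm]
    exact Real.rpow_lt_rpow (by positivity) (by exact_mod_cast hma) hs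
  nlinarith [sq_nonneg (m ^ s - 1)]

/-- For `K = [[1,0],[0,0]]` and `M = [[1,t],[t,1]]` with `0 < t² < 1/2`, the map
`A ↦ tr((K* A M A K)^s)` is not concave on `2×2` positive definite matrices for any `s > 0`. -/
theorem not_concave (s : ℝ) (hs : 0 < s) (t : ℝ) (ht0 : 0 < t ^ 2) (ht : t ^ 2 < 1/2) :
    ¬ ConcaveOn ℝ {A : Matrix (Fin 2) (Fin 2) ℂ | A.PosDef}
      (fun A => ((matRpow s ((!![1, 0; 0, 0] : Matrix (Fin 2) (Fin 2) ℂ)ᴴ * A *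
        !![1, (t : ℂ); (t : ℂ), 1] * A * !![1, 0; 0, 0])).trace).re) := by
  intro hconc
  have h := hconc.2 (corrMatrix_posDef (ρ := 0) (by norm_num))
    (corrMatrix_posDef (ρ := -t / 2) (by nlinarith)) (by norm_num : (0 : ℝ) ≤ 1 / 2)
    (by norm_num : (0 : ℝ) ≤ 1 / 2) (by norm_num)
  rw [smul_corrMatrix_add_smul_corrMatrix (by norm_num)] at h
  have hM : !![1, (t : ℂ); (t : ℂ), 1] = corrMatrix t := rfl
  simp only [hM, re_trace_matRpow_compress_corrMatrix hs.ne'] at h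
  have hlt := rpow_lt_one_add_rpow_div_two (m := 1 + 2 * (-t / 4) * t + (-t / 4) ^ 2)
    (a := 1 + 2 * (-t / 2) * t + (-t / 2) ^ 2) (by nlinarith) (by nlinarith) hs
  norm_num at h
  ring_nf at h hlt
  linarith
end
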